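/- arXiv:1010.4070 — 6 statements merged into one kernel-verified Lean document; each statement's English description precedes it below -/
import Mathlib

section
/- Let Ω ⊆ ℝⁿ be an open convex set and let E : ℝⁿ → ℝ be twice continuously differentiable on Ω, with its Hessian (the second derivative of E) positive definite at every point of Ω. Then the gradient map ∇E : Ω → ℝⁿ is an injective open map, hence a homeomorphism onto its image. -/
/-!
Along the segment from `p` to `q` in `Ω`, the function `t ↦ DE(p + t (q - p)) (q - p)` has as
derivative the Hessian form at `p + t (q - p)` evaluated on `q - p`, so it is strictly increasing
and `DE p ≠ DE q`. At each point of `Ω` the derivative of `∇E` is injective, hence invertible in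
finite dimension, and the inverse function theorem makes `∇E` map neighbourhoods onto
neighbourhoods. A continuous injective open map is an embedding.
-/

open Set Filter Topology InnerProductSpace

section Topological

variable {X Y : Type*} [TopologicalSpace X] [TopologicalSpace Y]

theorem isOpen_image_of_nhds_le_map {f : X → Y} {s : Set X}
    (hf : ∀ x ∈ s, 𝓝 (f x) ≤ map f (𝓝 x)) {U : Set X} (hUs : U ⊆ s) (hU : IsOpen U) :
    IsOpen (f '' U) := by
  refine isOpen_iff_mem_nhds.2 ?_
  rintro _ ⟨x, hx, rfl⟩
  exact hf x (hUs hx) (image_mem_map (hU.mem_nhds hx))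

theorem IsOpen.isOpenMap_domRestrict_of_nhds_le_map {f : X → Y} {s : Set X} (hs : IsOpen s)
    (hf : ∀ x ∈ s, 𝓝 (f x) ≤ map f (𝓝 x)) : IsOpenMap (s.domRestrict f) := by
  intro V hV
  rw [domRestrict_eq, image_comp]
  exact isOpen_image_of_nhds_le_map hf (Subtype.coe_image_subset s V)
    (hs.isOpenMap_subtype_val V hV)

theorem exists_homeomorph_image_of_isOpenMap_domRestrict {f : X → Y} {s : Set X}
    (hcont : ContinuousOn f s) (hinj : InjOn f s) (hopen : IsOpenMap (s.domRestrict f)) :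
    ∃ h : s ≃ₜ f '' s, ∀ x : s, (h x : Y) = f x := by
  have hemb : IsEmbedding (s.domRestrict f) :=
    (IsOpenEmbedding.of_continuous_injective_isOpenMap hcont.domRestrict hinj.injective
      hopen).isEmbedding
  exact ⟨hemb.toHomeomorph.trans (.setCongr (range_domRestrict f s)), fun _ => rfl⟩

end Topological

section Monotone

variable {F : Type*} [NormedAddCommGroup F] [NormedSpace ℝ F]

theorem ContinuousLinearMap.injective_of_apply_self_pos {B : F →L[ℝ] F →L[ℝ] ℝ}
    (hB : ∀ v ≠ 0, 0 < B v v) : Function.Injective B := by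
  refine (injective_iff_map_eq_zero B).2 fun v hv => ?_
  by_contra hv0
  simpa [hv] using hB v hv0

theorem Convex.apply_sub_lt_apply_sub_of_hasFDerivAt {Ω : Set F} (hΩ : Convex ℝ Ω)
    {f : F → F →L[ℝ] ℝ} {f' : F → F →L[ℝ] F →L[ℝ] ℝ}
    (hf : ∀ x ∈ Ω, HasFDerivAt f (f' x) x) (hf' : ∀ x ∈ Ω, ∀ v ≠ 0, 0 < f' x v v)
    {p q : F} (hp : p ∈ Ω) (hq : q ∈ Ω) (hpq : p ≠ q) :
    f p (q - p) < f q (q - p) := by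
  set v := q - p
  have hseg : ∀ t ∈ Icc (0 : ℝ) 1, p + t • v ∈ Ω := fun t ht =>
    hΩ.add_smul_sub_mem hp hq ht
  have hderiv : ∀ t ∈ Icc (0 : ℝ) 1,
      HasDerivAt (fun s : ℝ => f (p + s • v) v) (f' (p + t • v) v v) t := by
    intro t ht
    have hline : HasDerivAt (fun s : ℝ => p + s • v) v t := by
      simpa using ((hasDerivAt_id t).smul_const v).const_add p
    exact (ContinuousLinearMap.apply ℝ ℝ v).hasFDerivAt.comp_hasDerivAt t
      ((hf _ (hseg t ht)).comp_hasDerivAt t hline)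
  have hmono : StrictMonoOn (fun s : ℝ => f (p + s • v) v) (Icc 0 1) :=
    strictMonoOn_of_hasDerivWithinAt_pos (convex_Icc 0 1)
      (fun t ht => (hderiv t ht).continuousAt.continuousWithinAt)
      (fun t ht => (hderiv t (interior_subset ht)).hasDerivWithinAt)
      (fun t ht => hf' _ (hseg t (interior_subset ht)) v (sub_ne_zero.2 hpq.symm))
  simpa [v] using hmono (left_mem_Icc.2 zero_le_one) (right_mem_Icc.2 zero_le_one) zero_lt_one

theorem Convex.injOn_of_hasFDerivAt_apply_self_pos {Ω : Set F} (hΩ : Convex ℝ Ω)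
    {f : F → F →L[ℝ] ℝ} {f' : F → F →L[ℝ] F →L[ℝ] ℝ}
    (hf : ∀ x ∈ Ω, HasFDerivAt f (f' x) x) (hf' : ∀ x ∈ Ω, ∀ v ≠ 0, 0 < f' x v v) :
    InjOn f Ω := fun p hp q hq hfpq => by
  by_contra hpq
  exact (hΩ.apply_sub_lt_apply_sub_of_hasFDerivAt hf hf' hp hq hpq).ne (by rw [hfpq])

end Monotone

section Gradient

variable {F : Type*} [NormedAddCommGroup F] [InnerProductSpace ℝ F] [FiniteDimensional ℝ F]

theorem HasStrictFDerivAt.map_nhds_eq_of_injective {f : F → F} {f' : F →L[ℝ] F} {a : F}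
    (hf : HasStrictFDerivAt f f' a) (hf' : Function.Injective f') :
    map f (𝓝 a) = 𝓝 (f a) :=
  hf.map_nhds_eq_of_surj (LinearMap.range_eq_top.2 (LinearMap.injective_iff_surjective.1 hf'))

theorem map_nhds_gradient_eq {E : F → ℝ} {p : F} (hE : ContDiffAt ℝ 2 E p)
    (hHess : ∀ v ≠ 0, 0 < fderiv ℝ (fderiv ℝ E) p v v) :
    map (gradient E) (𝓝 p) = 𝓝 (gradient E p) := by
  let L : StrongDual ℝ F ≃L[ℝ] F := (toDual ℝ F).symm.toContinuousLinearEquiv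
  have hstrict : HasStrictFDerivAt (gradient E)
      ((L : StrongDual ℝ F →L[ℝ] F).comp (fderiv ℝ (fderiv ℝ E) p)) p :=
    L.hasStrictFDerivAt.comp p ((hE.fderiv_right le_rfl).hasStrictFDerivAt one_ne_zero)
  exact hstrict.map_nhds_eq_of_injective <|
    L.injective.comp (ContinuousLinearMap.injective_of_apply_self_pos hHess)

end Gradient

/-- If `E` is twice continuously differentiable on an open convex
set `Ω ⊆ ℝⁿ` with positive definite Hessian at every point of `Ω`, then the
gradient map `∇E : Ω → ℝⁿ` is an injective open map, hence a homeomorphism onto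
its image. -/
theorem gradient_map_injective_open_homeomorph
    {n : ℕ} (Ω : Set (EuclideanSpace ℝ (Fin n)))
    (hΩopen : IsOpen Ω) (hΩconv : Convex ℝ Ω)
    (E : EuclideanSpace ℝ (Fin n) → ℝ)
    (hC2 : ContDiffOn ℝ 2 E Ω)
    (hHess : ∀ p ∈ Ω, ∀ v : EuclideanSpace ℝ (Fin n), v ≠ 0 →
      0 < fderiv ℝ (fderiv ℝ E) p v v) :
    Set.InjOn (fun p => gradient E p) Ω ∧
    (∀ U ⊆ Ω, IsOpen U → IsOpen ((fun p => gradient E p) '' U)) ∧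
    ∃ h : Ω ≃ₜ ((fun p => gradient E p) '' Ω),
      ∀ p : Ω, (h p : EuclideanSpace ℝ (Fin n)) = gradient E p := by
  have hE : ∀ p ∈ Ω, ContDiffAt ℝ 2 E p := fun p hp => hC2.contDiffAt (hΩopen.mem_nhds hp)
  have hinj : InjOn (gradient E) Ω :=
    (toDual ℝ _).symm.injective.comp_injOn <| hΩconv.injOn_of_hasFDerivAt_apply_self_pos
      (fun p hp => ((hE p hp).fderiv_right le_rfl).differentiableAt one_ne_zero |>.hasFDerivAt)
      hHess
  have hnhds : ∀ p ∈ Ω, 𝓝 (gradient E p) ≤ map (gradient E) (𝓝 p) := fun p hp =>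
    (map_nhds_gradient_eq (hE p hp) (hHess p hp)).ge
  have hcont : ContinuousOn (gradient E) Ω :=
    (toDual ℝ _).symm.continuous.comp_continuousOn
      (hC2.continuousOn_fderiv_of_isOpen hΩopen one_le_two)
  exact ⟨hinj, fun U hUΩ hU => isOpen_image_of_nhds_le_map hnhds hUΩ hU,
    exists_homeomorph_image_of_isOpenMap_domRestrict hcont hinj
      (hΩopen.isOpenMap_domRestrict_of_nhds_le_map hnhds)⟩
end

section
/- Fix positive reals d_i, d_k. For y > 0 such that d_i, y, d_k satisfy the strict triangle inequalities, define θ_i(y) = arccos((y² + d_k² − d_i²)/(2 y d_k)). Then θ_i has derivative dθ_i/dy = −(d_i cos θ_k)/(2A) at each such y, where cos θ_k = (d_i² + y² − d_k²)/(2 d_i y) and A = (1/2) y d_k sin(θ_i(y)) is the area of the Euclidean triangle with side lengths d_i, y, d_k. -/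
/-! Chain rule: `θ_i = arccos ∘ c` with `c(y) = (y² + d_k² − d_i²)/(2 y d_k)`, so
`c'(y) = (d_i² + y² − d_k²)/(2 y² d_k) = d_i cos θ_k / (y d_k)` and
`arccos' (c y) = −1 / sin θ_i`. The strict triangle inequalities are exactly what keeps
`c y` inside `(−1, 1)`, where `arccos` is differentiable. -/

open Real Set

theorem cos_law_mem_Ioo {a b c : ℝ} (hb : 0 < b) (hc : 0 < c) (ha : a < b + c)
    (hb' : b < a + c) (hc' : c < a + b) :
    (b ^ 2 + c ^ 2 - a ^ 2) / (2 * b * c) ∈ Ioo (-1) 1 := by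
  have hbc : 0 < 2 * b * c := by positivity
  constructor
  · rw [lt_div_iff₀ hbc]
    nlinarith [mul_pos (sub_pos.2 ha) (by linarith : 0 < a + b + c)]
  · rw [div_lt_one hbc]
    nlinarith [mul_pos (sub_pos.2 hb') (sub_pos.2 hc')]

theorem hasDerivAt_cos_law (a : ℝ) {b c : ℝ} (hb : b ≠ 0) (hc : c ≠ 0) :
    HasDerivAt (fun z : ℝ => (z ^ 2 + c ^ 2 - a ^ 2) / (2 * z * c))
      ((a ^ 2 + b ^ 2 - c ^ 2) / (2 * b ^ 2 * c)) b := by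
  have hnum : HasDerivAt (fun z : ℝ => z ^ 2 + c ^ 2 - a ^ 2) (2 * b) b := by
    simpa using ((hasDerivAt_pow 2 b).add_const (c ^ 2)).sub_const (a ^ 2)
  have hden : HasDerivAt (fun z : ℝ => 2 * z * c) (2 * c) b := by
    simpa using ((hasDerivAt_id b).const_mul 2).mul_const c
  refine (hnum.div hden (by positivity)).congr_deriv ?_
  field_simp
  ring

theorem deriv_angle_adjacent_edge_general
    (di dk : ℝ) (hdk : 0 < dk)
    (y : ℝ) (hy : 0 < y)
    (h₁ : di < y + dk) (h₂ : y < di + dk) (h₃ : dk < di + y) :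
    HasDerivAt (fun z : ℝ => Real.arccos ((z ^ 2 + dk ^ 2 - di ^ 2) / (2 * z * dk)))
      (-(di * ((di ^ 2 + y ^ 2 - dk ^ 2) / (2 * di * y))) /
        (2 * ((1 / 2) * y * dk *
          Real.sin (Real.arccos ((y ^ 2 + dk ^ 2 - di ^ 2) / (2 * y * dk)))))) y := by
  obtain ⟨hx₁, hx₂⟩ := cos_law_mem_Ioo hy hdk h₁ h₂ h₃
  have hdi : di ≠ 0 := by linarith
  refine ((hasDerivAt_arccos hx₁.ne' hx₂.ne).comp y
    (hasDerivAt_cos_law di hy.ne' hdk.ne')).congr_deriv ?_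
  rw [sin_arccos]
  field_simp

/-- For a Euclidean triangle with side lengths `d_i, y, d_k`
(satisfying the strict triangle inequalities), the angle
`θ_i(y) = arccos((y² + d_k² − d_i²)/(2 y d_k))` opposite the side of length
`d_i` satisfies `dθ_i/dy = −(d_i cos θ_k)/(2A)`, where
`cos θ_k = (d_i² + y² − d_k²)/(2 d_i y)` and `A = (1/2) y d_k sin θ_i(y)` is
the area of the triangle. -/
theorem deriv_angle_adjacent_edge
    (di dk : ℝ) (hdi : 0 < di) (hdk : 0 < dk)
    (y : ℝ) (hy : 0 < y)
    (h₁ : di < y + dk) (h₂ : y < di + dk) (h₃ : dk < di + y) :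
    HasDerivAt (fun z : ℝ => Real.arccos ((z ^ 2 + dk ^ 2 - di ^ 2) / (2 * z * dk)))
      (-(di * ((di ^ 2 + y ^ 2 - dk ^ 2) / (2 * di * y))) /
        (2 * ((1 / 2) * y * dk *
          Real.sin (Real.arccos ((y ^ 2 + dk ^ 2 - di ^ 2) / (2 * y * dk)))))) y :=
  deriv_angle_adjacent_edge_general di dk hdk y hy h₁ h₂ h₃
end

section
/- Let Ω = {u ∈ ℝ³ : u₁, u₂, u₃ > 0 and √u₁, √u₂, √u₃ satisfy the strict triangle inequalities}. For u ∈ Ω and α ∈ {1,2,3}, let W_α(u) = cot θ_α, where θ_α is the angle opposite the side of length d_α = √(2 u_α) in the Euclidean triangle with side lengths d₁, d₂, d₃. Then for all u ∈ Ω and all α, β ∈ {1,2,3}, the mixed partial derivatives are symmetric: ∂W_α/∂u_β (u) = ∂W_β/∂u_α (u). -/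
/-- The edge length `d_α = √(2 u_α)` determined by the variable `u_α = d_α²/2`. -/
noncomputable def triEdge (u : Fin 3 → ℝ) (α : Fin 3) : ℝ :=
  Real.sqrt (2 * u α)

/-- The angle opposite the side `d_α`, by the law of cosines. -/
noncomputable def triAngle (u : Fin 3 → ℝ) (α : Fin 3) : ℝ :=
  Real.arccos ((triEdge u (α + 1) ^ 2 + triEdge u (α + 2) ^ 2 - triEdge u α ^ 2) /
    (2 * triEdge u (α + 1) * triEdge u (α + 2)))

/-- The cotangent edge weight `W_α(u) = cot θ_α`. -/
noncomputable def triWeight (α : Fin 3) (u : Fin 3 → ℝ) : ℝ :=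
  Real.cot (triAngle u α)

/-- The admissible metric space: `u_α > 0` and `√u₁, √u₂, √u₃` satisfy the strict
triangle inequalities. -/
def triOmega : Set (Fin 3 → ℝ) :=
  {u | (∀ α, 0 < u α) ∧
    ∀ α, Real.sqrt (u α) < Real.sqrt (u (α + 1)) + Real.sqrt (u (α + 2))}

/-! By Heron's formula, `triHeron u = 2(u₀u₁ + u₁u₂ + u₂u₀) - (u₀² + u₁² + u₂²)` is four times the
squared area of the triangle, and by the law of cosines
`cot θ_α = (u_β + u_γ - u_α) / √(triHeron u) = ∂ √(triHeron u) / ∂u_α`.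
So the cotangent weights form the gradient of the smooth function `2 · area` on the open set `Ω`,
and the claim is the symmetry of its Hessian. -/

open Filter Topology

theorem fderiv_fderiv_apply_comm {𝕜 E F : Type*} [RCLike 𝕜] [NormedAddCommGroup E]
    [NormedSpace 𝕜 E] [NormedAddCommGroup F] [NormedSpace 𝕜 F] {f : E → F} {x : E}
    (hf : ContDiffAt 𝕜 2 f x) (v w : E) :
    fderiv 𝕜 (fun y => fderiv 𝕜 f y v) x w = fderiv 𝕜 (fun y => fderiv 𝕜 f y w) x v := by
  have hd : DifferentiableAt 𝕜 (fderiv 𝕜 f) x :=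
    (hf.fderiv_right (m := 1) le_rfl).differentiableAt one_ne_zero
  rw [fderiv_clm_apply hd (differentiableAt_const v), fderiv_clm_apply hd (differentiableAt_const w)]
  simpa using hf.isSymmSndFDerivAt (by simp) w v

namespace Real

-- For `1 < |x|` both sides are junk zeros.
theorem cot_arccos (x : ℝ) : cot (arccos x) = x / √(1 - x ^ 2) := by
  rw [cot_eq_cos_div_sin, sin_arccos]
  by_cases h : √(1 - x ^ 2) = 0
  · simp [h]
  · have hx : x ^ 2 < 1 := by
      by_contra! hx
      exact h (sqrt_eq_zero'.2 (by linarith))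
    rw [cos_arccos (by nlinarith) (by nlinarith)]

end Real

noncomputable def triHeron (u : Fin 3 → ℝ) : ℝ :=
  2 * (u 0 * u 1 + u 1 * u 2 + u 2 * u 0) - (u 0 ^ 2 + u 1 ^ 2 + u 2 ^ 2)

noncomputable def triDoubleArea (u : Fin 3 → ℝ) : ℝ :=
  √(triHeron u)

theorem triHeron_eq_four_mul_sub_sq (u : Fin 3 → ℝ) (γ : Fin 3) :
    triHeron u = 4 * u (γ + 1) * u (γ + 2) - (u (γ + 1) + u (γ + 2) - u γ) ^ 2 := by
  fin_cases γ <;> simp [triHeron] <;> ring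

theorem triHeron_pos {u : Fin 3 → ℝ} (hu : u ∈ triOmega) : 0 < triHeron u := by
  obtain ⟨hpos, htri⟩ := hu
  have hsq (i : Fin 3) : √(u i) ^ 2 = u i := Real.sq_sqrt (hpos i).le
  have h0 := htri 0
  have h1 := htri 1
  have h2 := htri 2
  simp only [Fin.reduceAdd] at h0 h1 h2
  have hheron : triHeron u = (√(u 0) + √(u 1) + √(u 2)) * (√(u 1) + √(u 2) - √(u 0)) *
      (√(u 2) + √(u 0) - √(u 1)) * (√(u 0) + √(u 1) - √(u 2)) := by
    conv_lhs => rw [triHeron, ← hsq 0, ← hsq 1, ← hsq 2]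
    ring
  rw [hheron]
  have hsqrt_nonneg := Real.sqrt_nonneg (u 0)
  apply_rules [mul_pos] <;> linarith

theorem isOpen_triOmega : IsOpen triOmega := by
  simp only [triOmega, Set.ofPred_and, Set.ofPred_forall]
  refine (isOpen_iInter_of_finite fun i => ?_).inter (isOpen_iInter_of_finite fun i => ?_) <;>
    exact isOpen_lt (by fun_prop) (by fun_prop)

theorem triWeight_eq_div {v : Fin 3 → ℝ} (hv : ∀ i, 0 < v i) (γ : Fin 3) :
    triWeight γ v = (v (γ + 1) + v (γ + 2) - v γ) / √(triHeron v) := by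
  have hedge (i : Fin 3) : triEdge v i ^ 2 = 2 * v i := Real.sq_sqrt (by linarith [hv i])
  set r := √(v (γ + 1) * v (γ + 2))
  have hr : 0 < r := Real.sqrt_pos.2 (mul_pos (hv _) (hv _))
  have hr2 : r ^ 2 = v (γ + 1) * v (γ + 2) := Real.sq_sqrt (mul_pos (hv _) (hv _)).le
  have hprod : triEdge v (γ + 1) * triEdge v (γ + 2) = 2 * r := by
    rw [triEdge, triEdge, ← Real.sqrt_mul (by linarith [hv (γ + 1)]),
      show 2 * v (γ + 1) * (2 * v (γ + 2)) = 2 ^ 2 * (v (γ + 1) * v (γ + 2)) by ring,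
      Real.sqrt_mul (by norm_num), Real.sqrt_sq (by norm_num)]
  have hsin_sq : 1 - ((v (γ + 1) + v (γ + 2) - v γ) / (2 * r)) ^ 2 = triHeron v / (2 * r) ^ 2 := by
    have := (hv (γ + 1)).ne'
    have := (hv (γ + 2)).ne'
    rw [div_pow, mul_pow, hr2, triHeron_eq_four_mul_sub_sq v γ]
    field_simp
    ring
  unfold triWeight triAngle
  rw [hedge, hedge, hedge, mul_assoc 2, hprod,
    show 2 * v (γ + 1) + 2 * v (γ + 2) - 2 * v γ = 2 * (v (γ + 1) + v (γ + 2) - v γ) by ring,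
    mul_div_mul_left _ _ two_ne_zero, Real.cot_arccos, hsin_sq, Real.sqrt_div' _ (sq_nonneg _),
    Real.sqrt_sq (by positivity), div_div_div_cancel_right₀ (by positivity)]

theorem hasFDerivAt_triHeron (u : Fin 3 → ℝ) :
    HasFDerivAt triHeron
      (∑ γ, (2 * (u (γ + 1) + u (γ + 2) - u γ)) •
        ContinuousLinearMap.proj (R := ℝ) (φ := fun _ : Fin 3 => ℝ) γ) u := by
  have hx (i : Fin 3) : HasFDerivAt (fun v : Fin 3 → ℝ => v i) (ContinuousLinearMap.proj i) u :=
    hasFDerivAt_apply (𝕜 := ℝ) i u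
  have h : HasFDerivAt triHeron _ u :=
    (((((hx 0).mul (hx 1)).add ((hx 1).mul (hx 2))).add ((hx 2).mul (hx 0))).const_mul 2).sub
      ((((hx 0).pow 2).add ((hx 1).pow 2)).add ((hx 2).pow 2))
  refine h.congr_fderiv (ContinuousLinearMap.ext fun w => ?_)
  simp only [Fin.isValue, smul_add, Nat.add_one_sub_one, pow_one, nsmul_eq_mul, Nat.cast_ofNat,
    sub_apply, add_apply, smul_apply, ContinuousLinearMap.proj_apply, smul_eq_mul,
    Fin.sum_univ_three, zero_add, Fin.reduceAdd]
  ring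

theorem fderiv_triDoubleArea_single {v : Fin 3 → ℝ} (hQ : 0 < triHeron v) (γ : Fin 3) :
    fderiv ℝ triDoubleArea v (Pi.single γ 1) = (v (γ + 1) + v (γ + 2) - v γ) / √(triHeron v) := by
  have h : HasFDerivAt triDoubleArea _ v := (hasFDerivAt_triHeron v).sqrt hQ.ne'
  rw [h.fderiv]
  simp only [one_div, mul_inv_rev, smul_apply, sum_apply, ContinuousLinearMap.proj_apply,
    Pi.single_apply, smul_eq_mul, mul_ite, mul_one, mul_zero,
    Finset.sum_ite_eq', Finset.mem_univ, if_true]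
  field_simp

theorem triWeight_eq_fderiv_triDoubleArea {v : Fin 3 → ℝ} (hv : v ∈ triOmega) (γ : Fin 3) :
    triWeight γ v = fderiv ℝ triDoubleArea v (Pi.single γ 1) := by
  rw [triWeight_eq_div hv.1, fderiv_triDoubleArea_single (triHeron_pos hv)]

theorem contDiffAt_triDoubleArea {u : Fin 3 → ℝ} (hQ : 0 < triHeron u) {n : WithTop ℕ∞} :
    ContDiffAt ℝ n triDoubleArea u :=
  (show ContDiff ℝ n triHeron by unfold triHeron; fun_prop).contDiffAt.sqrt hQ.ne'

/-- The mixed partial derivatives of the cotangent weights are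
symmetric: `∂W_α/∂u_β = ∂W_β/∂u_α` on the admissible metric space. -/
theorem cot_weight_partial_symm (u : Fin 3 → ℝ) (hu : u ∈ triOmega) (α β : Fin 3) :
    fderiv ℝ (triWeight α) u (Pi.single β 1) = fderiv ℝ (triWeight β) u (Pi.single α 1) := by
  have hW (γ : Fin 3) : triWeight γ =ᶠ[𝓝 u] fun v => fderiv ℝ triDoubleArea v (Pi.single γ 1) :=
    eventually_of_mem (isOpen_triOmega.mem_nhds hu) fun v hv =>
      triWeight_eq_fderiv_triDoubleArea hv γ
  rw [(hW α).fderiv_eq, (hW β).fderiv_eq]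
  exact fderiv_fderiv_apply_comm (contDiffAt_triDoubleArea (triHeron_pos hu)) _ _
end

section
/- Let Ω = {u ∈ ℝ³ : u₁, u₂, u₃ > 0 and √u₁, √u₂, √u₃ satisfy the strict triangle inequalities}, and for u ∈ Ω let W_α(u) = cot θ_α, where θ_α is the angle opposite the side of length d_α = √(2 u_α) in the Euclidean triangle with side lengths d₁, d₂, d₃. Then the 1-form Σ_α W_α du_α is exact on Ω: there exists a differentiable function E : Ω → ℝ such that ∂E/∂u_α (u) = W_α(u) for every u ∈ Ω and α ∈ {1,2,3}. -/
/-!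
By Heron's formula, `Q(u) = 2(u₁u₂ + u₂u₃ + u₃u₁) - u₁² - u₂² - u₃²` is `4 A²`, where `A` is the
area of the triangle, and the law of cosines gives `cot θ_α = (u_β + u_γ - u_α) / √Q`.
Since `∂Q/∂u_α = 2(u_β + u_γ - u_α)`, the function `E = √Q = 2A` is a primitive of the form.
-/

open Real

theorem Real.cot_arccos_s7 {x : ℝ} (hx₁ : -1 ≤ x) (hx₂ : x ≤ 1) :
    cot (arccos x) = x / √(1 - x ^ 2) := by
  rw [cot_eq_cos_div_sin, cos_arccos hx₁ hx₂, sin_arccos]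

theorem Real.cot_arccos_div {n m : ℝ} (hm : 0 < m) (hnm : n ^ 2 < m ^ 2) :
    cot (arccos (n / m)) = n / √(m ^ 2 - n ^ 2) := by
  have hsq : (n / m) ^ 2 ≤ 1 := by
    rw [div_pow, div_le_one (by positivity)]; exact hnm.le
  obtain ⟨hx₁, hx₂⟩ := abs_le.mp ((sq_le_one_iff_abs_le_one _).mp hsq)
  have hroot : √(1 - (n / m) ^ 2) = √(m ^ 2 - n ^ 2) / m := by
    rw [show 1 - (n / m) ^ 2 = (m ^ 2 - n ^ 2) / m ^ 2 by field_simp, sqrt_div' _ (sq_nonneg m),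
      sqrt_sq hm.le]
  have hpos : 0 < √(m ^ 2 - n ^ 2) := sqrt_pos.mpr (sub_pos.mpr hnm)
  rw [cot_arccos_s7 hx₁ hx₂, hroot]
  field_simp

theorem cot_arccos_lawOfCosines {a b c : ℝ} (ha : 0 ≤ a) (hb : 0 < b) (hc : 0 < c)
    (hQ : 0 < 2 * (a * b + b * c + c * a) - a ^ 2 - b ^ 2 - c ^ 2) :
    cot (arccos ((√(2 * b) ^ 2 + √(2 * c) ^ 2 - √(2 * a) ^ 2) / (2 * √(2 * b) * √(2 * c)))) =
      (b + c - a) / √(2 * (a * b + b * c + c * a) - a ^ 2 - b ^ 2 - c ^ 2) := by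
  set Q := 2 * (a * b + b * c + c * a) - a ^ 2 - b ^ 2 - c ^ 2
  have hm : 0 < 2 * √(2 * b) * √(2 * c) := by positivity
  have hm2 : (2 * √(2 * b) * √(2 * c)) ^ 2 = 16 * b * c := by
    rw [mul_pow, mul_pow, sq_sqrt (by positivity), sq_sqrt (by positivity)]; ring
  have harea : (2 * √(2 * b) * √(2 * c)) ^ 2 - (2 * b + 2 * c - 2 * a) ^ 2 = 2 ^ 2 * Q := by
    rw [hm2]; ring
  rw [sq_sqrt (by positivity), sq_sqrt (by positivity), sq_sqrt (by positivity),
    cot_arccos_div hm (by linarith), harea, sqrt_mul (by positivity), sqrt_sq zero_le_two]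
  have : 0 < √Q := sqrt_pos.mpr hQ
  field_simp

theorem heron_factorization (x y z : ℝ) :
    2 * (x ^ 2 * y ^ 2 + y ^ 2 * z ^ 2 + z ^ 2 * x ^ 2) - (x ^ 2) ^ 2 - (y ^ 2) ^ 2 - (z ^ 2) ^ 2 =
      (x + y + z) * (-x + y + z) * (x - y + z) * (x + y - z) := by
  ring

theorem heron_pos_of_sqrt_triangle {a b c : ℝ} (ha : 0 ≤ a) (hb : 0 ≤ b) (hc : 0 ≤ c)
    (hab : √a < √b + √c) (hbc : √b < √c + √a) (hca : √c < √a + √b) :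
    0 < 2 * (a * b + b * c + c * a) - a ^ 2 - b ^ 2 - c ^ 2 := by
  rw [← sq_sqrt ha, ← sq_sqrt hb, ← sq_sqrt hc, heron_factorization]
  have hsum : 0 < √a + √b + √c := by linarith
  exact mul_pos (mul_pos (mul_pos hsum (by linarith)) (by linarith)) (by linarith)

/-- Four times the squared area of the triangle with side lengths `√(2 u_α)`. -/
def heronQuad (u : Fin 3 → ℝ) : ℝ :=
  2 * (u 0 * u 1 + u 1 * u 2 + u 2 * u 0) - u 0 ^ 2 - u 1 ^ 2 - u 2 ^ 2

theorem heronQuad_eq_rotate (u : Fin 3 → ℝ) (α : Fin 3) :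
    heronQuad u = 2 * (u α * u (α + 1) + u (α + 1) * u (α + 2) + u (α + 2) * u α) -
      u α ^ 2 - u (α + 1) ^ 2 - u (α + 2) ^ 2 := by
  fin_cases α <;> simp only [heronQuad, Fin.isValue, Fin.zero_eta, Fin.mk_one, Fin.reduceFinMk,
    Fin.reduceAdd, zero_add] <;> ring

theorem heronQuad_pos {u : Fin 3 → ℝ} (hu : u ∈ triOmega) : 0 < heronQuad u := by
  obtain ⟨hpos, htri⟩ := hu
  exact heron_pos_of_sqrt_triangle (hpos 0).le (hpos 1).le (hpos 2).le (htri 0)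
    (by simpa using htri 1) (by simpa using htri 2)

theorem triWeight_eq {u : Fin 3 → ℝ} (hu : u ∈ triOmega) (α : Fin 3) :
    triWeight α u = (u (α + 1) + u (α + 2) - u α) / √(heronQuad u) := by
  have hQ := heronQuad_pos hu
  rw [heronQuad_eq_rotate u α] at hQ ⊢
  exact cot_arccos_lawOfCosines (hu.1 _).le (hu.1 _) (hu.1 _) hQ

theorem hasFDerivAt_heronQuad (u : Fin 3 → ℝ) :
    HasFDerivAt heronQuad
      (∑ α, (2 * (u (α + 1) + u (α + 2) - u α)) •
        (ContinuousLinearMap.proj α : (Fin 3 → ℝ) →L[ℝ] ℝ)) u := by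
  have hproj (α : Fin 3) := hasFDerivAt_apply (𝕜 := ℝ) α u
  have hpoly := (((((hproj 0).mul (hproj 1)).add ((hproj 1).mul (hproj 2))).add
    ((hproj 2).mul (hproj 0))).const_mul 2).sub ((hproj 0).pow 2) |>.sub ((hproj 1).pow 2)
    |>.sub ((hproj 2).pow 2)
  refine hpoly.congr_fderiv ?_
  ext v
  simp only [sub_apply, add_apply, smul_apply, ContinuousLinearMap.proj_apply, smul_add,
    nsmul_eq_mul, Nat.cast_ofNat, Nat.add_one_sub_one, pow_one, smul_eq_mul, Fin.sum_univ_three, Fin.isValue,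
    Fin.reduceAdd, zero_add]
  ring

/-- The 1-form `Σ_α W_α du_α` is exact on the admissible metric
space: there is a differentiable function `E` with `∂E/∂u_α = W_α` there. -/
theorem cot_weight_one_form_exact :
    ∃ E : (Fin 3 → ℝ) → ℝ, ∀ u ∈ triOmega, DifferentiableAt ℝ E u ∧
      ∀ α : Fin 3, fderiv ℝ E u (Pi.single α 1) = triWeight α u := by
  refine ⟨fun u => √(heronQuad u), fun u hu => ?_⟩
  have hQ := heronQuad_pos hu
  have hE := (hasFDerivAt_heronQuad u).sqrt hQ.ne'
  refine ⟨hE.differentiableAt, fun α => ?_⟩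
  have hroot : 0 < √(heronQuad u) := sqrt_pos.mpr hQ
  rw [hE.fderiv, triWeight_eq hu α]
  simp only [smul_apply, sum_apply, ContinuousLinearMap.proj_apply, Pi.single_apply, smul_eq_mul, mul_ite, mul_one, mul_zero,
    Finset.sum_ite_eq', Finset.mem_univ, if_true]
  field_simp
end

section
/- The set Ω_u = {(u₁, u₂, u₃) ∈ ℝ³ : u₁, u₂, u₃ > 0, √u₁ + √u₂ > √u₃, √u₂ + √u₃ > √u₁, √u₃ + √u₁ > √u₂, and u₁ + u₂ + u₃ = 3} is a convex subset of ℝ³. -/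
/-!
For positive `p, q, r`, the strict triangle inequality `√r < √p + √q` is equivalent to
`0 < p + q - r + 2 √p √q`. The right-hand side is concave, because the geometric mean
`√p √q` is concave (Cauchy–Schwarz), so each triangle inequality cuts out a strict superlevel
set of a concave function on the positive orthant. Intersecting the three of them with the
hyperplane `u₁ + u₂ + u₃ = 3` gives a convex set.
-/

open Set

theorem concaveOn_sqrt_mul_sqrt :
    ConcaveOn ℝ (Ici 0 ×ˢ Ici 0) (fun x : ℝ × ℝ => √x.1 * √x.2) := by
  refine ⟨(convex_Ici 0).prod (convex_Ici 0), ?_⟩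
  rintro ⟨p, q⟩ ⟨hp, hq⟩ ⟨p', q'⟩ ⟨hp', hq'⟩ a b ha hb -
  simp only [mem_Ici, smul_eq_mul, Prod.smul_mk, Prod.mk_add_mk] at *
  rw [← Real.sqrt_mul (x := a * p + b * p') (by positivity),
    Real.le_sqrt (by positivity) (by positivity)]
  obtain ⟨s, hs, rfl⟩ : ∃ s, 0 ≤ s ∧ s ^ 2 = p := ⟨√p, Real.sqrt_nonneg p, Real.sq_sqrt hp⟩
  obtain ⟨t, ht, rfl⟩ : ∃ t, 0 ≤ t ∧ t ^ 2 = q := ⟨√q, Real.sqrt_nonneg q, Real.sq_sqrt hq⟩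
  obtain ⟨s', hs', rfl⟩ : ∃ s', 0 ≤ s' ∧ s' ^ 2 = p' :=
    ⟨√p', Real.sqrt_nonneg p', Real.sq_sqrt hp'⟩
  obtain ⟨t', ht', rfl⟩ : ∃ t', 0 ≤ t' ∧ t' ^ 2 = q' :=
    ⟨√q', Real.sqrt_nonneg q', Real.sq_sqrt hq'⟩
  simp only [Real.sqrt_sq, hs, ht, hs', ht']
  -- Lagrange's identity: the defect is `a b (s t' - s' t)²`.
  nlinarith [mul_nonneg (mul_nonneg ha hb) (sq_nonneg (s * t' - s' * t))]

theorem convex_setOf_forall_pos (ι : Type*) : Convex ℝ {u : ι → ℝ | ∀ α, 0 < u α} := by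
  simpa [Set.pi] using convex_pi (s := univ) fun α _ => convex_Ioi (0 : ℝ)

theorem convex_sqrt_lt_sqrt_add_sqrt {ι : Type*} (i j k : ι) :
    Convex ℝ {u : ι → ℝ | (∀ α, 0 < u α) ∧ √(u k) < √(u i) + √(u j)} := by
  set P := {u : ι → ℝ | ∀ α, 0 < u α}
  let π (α : ι) : (ι → ℝ) →ₗ[ℝ] ℝ := LinearMap.proj α
  have hgeom : ConcaveOn ℝ P fun u => √(u i) * √(u j) := by
    exact (concaveOn_sqrt_mul_sqrt.comp_linearMap ((π i).prod (π j))).subset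
      (fun u hu => ⟨(hu i).le, (hu j).le⟩) (convex_setOf_forall_pos ι)
  have hf : ConcaveOn ℝ P fun u => (u i + u j - u k) + 2 * (√(u i) * √(u j)) := by
    exact ((π i + π j - π k).concaveOn (convex_setOf_forall_pos ι)).add
      (hgeom.smul zero_le_two)
  suffices hset : {u : ι → ℝ | (∀ α, 0 < u α) ∧ √(u k) < √(u i) + √(u j)} =
      {u ∈ P | 0 < (u i + u j - u k) + 2 * (√(u i) * √(u j))} from
    hset ▸ hf.convex_gt 0
  refine Set.ext fun u => and_congr_right fun hu => ?_
  rw [Real.sqrt_lt' (by positivity [hu i, hu j]), add_sq, Real.sq_sqrt (hu i).le,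
    Real.sq_sqrt (hu j).le]
  constructor <;> intro h <;> linarith

/-- The admissible metric space
`Ω_u = {(u₁,u₂,u₃) : u_α > 0, √u₁ + √u₂ > √u₃, √u₂ + √u₃ > √u₁, √u₃ + √u₁ > √u₂,
u₁ + u₂ + u₃ = 3}` is convex. -/
theorem admissible_metric_space_convex :
    Convex ℝ {u : Fin 3 → ℝ |
      (∀ α, 0 < u α) ∧
      Real.sqrt (u 2) < Real.sqrt (u 0) + Real.sqrt (u 1) ∧
      Real.sqrt (u 0) < Real.sqrt (u 1) + Real.sqrt (u 2) ∧
      Real.sqrt (u 1) < Real.sqrt (u 2) + Real.sqrt (u 0) ∧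
      u 0 + u 1 + u 2 = 3} := by
  have hsum : Convex ℝ {u : Fin 3 → ℝ | u 0 + u 1 + u 2 = 3} :=
    convex_hyperplane ⟨fun x y => by simp only [Pi.add_apply]; ring,
      fun c x => by simp only [Pi.smul_apply, smul_eq_mul]; ring⟩ 3
  convert (((convex_sqrt_lt_sqrt_add_sqrt 0 1 2).inter (convex_sqrt_lt_sqrt_add_sqrt 1 2 0)).inter
    (convex_sqrt_lt_sqrt_add_sqrt 2 0 1)).inter hsum using 1
  ext u
  simp only [mem_ofPred_eq, mem_inter_iff]
  tauto
end

section
/- Let m be a positive integer and let F be a finite set of faces, each face being a triple {i, j, k} of distinct indices in Fin m (edges). Then the admissible metric space Ω_u = {u : Fin m → ℝ : u_e > 0 for all e, Σ_e u_e = m, and for every face {i,j,k} ∈ F the numbers √(u_i), √(u_j), √(u_k) satisfy the strict triangle inequalities} is a convex subset of ℝ^m. -/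
/-!
On each face the admissibility condition `√u_i < √u_j + √u_k` squares to
`u_i < u_j + u_k + 2 √u_j √u_k`, and `(u_j, u_k) ↦ √u_j √u_k` is concave on the positive
quadrant (two-term Cauchy–Schwarz). So within the positive orthant every face condition cuts
out a convex region, and so do positivity and the normalisation `Σ u_e = m`.
-/

open Real

theorem mul_sqrt_mul_sqrt_add_le {a b y z y' z' : ℝ} (ha : 0 ≤ a) (hb : 0 ≤ b)
    (hy : 0 ≤ y) (hz : 0 ≤ z) (hy' : 0 ≤ y') (hz' : 0 ≤ z') :
    a * (√y * √z) + b * (√y' * √z') ≤ √(a * y + b * y') * √(a * z + b * z') := by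
  rw [← sqrt_mul (by positivity : 0 ≤ a * y + b * y')]
  apply le_sqrt_of_sq_le
  have lagrange :
      (a * y + b * y') * (a * z + b * z') - (a * (√y * √z) + b * (√y' * √z')) ^ 2 =
        a * b * (√y * √z' - √y' * √z) ^ 2 := by
    rw [← sq_sqrt hy, ← sq_sqrt hz, ← sq_sqrt hy', ← sq_sqrt hz']
    simp only [sqrt_sq (sqrt_nonneg _)]
    ring
  nlinarith [mul_nonneg (mul_nonneg ha hb) (sq_nonneg (√y * √z' - √y' * √z))]

theorem sqrt_lt_sqrt_add_sqrt_combo {a b x y z x' y' z' : ℝ} (ha : 0 ≤ a) (hb : 0 ≤ b)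
    (hab : a + b = 1) (hx : 0 ≤ x) (hy : 0 ≤ y) (hz : 0 ≤ z)
    (hx' : 0 ≤ x') (hy' : 0 ≤ y') (hz' : 0 ≤ z')
    (h : √x < √y + √z) (h' : √x' < √y' + √z') :
    √(a * x + b * x') < √(a * y + b * y') + √(a * z + b * z') := by
  have hsq := lt_sq_of_sqrt_lt h
  have hsq' := lt_sq_of_sqrt_lt h'
  have hcomb : a * x + b * x' < a * (√y + √z) ^ 2 + b * (√y' + √z') ^ 2 := by
    rcases ha.eq_or_lt with rfl | ha_pos
    · obtain rfl : b = 1 := by linarith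
      linarith
    · linarith [mul_lt_mul_of_pos_left hsq ha_pos, mul_le_mul_of_nonneg_left hsq'.le hb]
  have hY : 0 ≤ a * y + b * y' := by positivity
  have hZ : 0 ≤ a * z + b * z' := by positivity
  have hsquared : a * x + b * x' < (√(a * y + b * y') + √(a * z + b * z')) ^ 2 :=
    calc a * x + b * x' < a * (√y + √z) ^ 2 + b * (√y' + √z') ^ 2 := hcomb
      _ = (a * y + b * y') + (a * z + b * z') + 2 * (a * (√y * √z) + b * (√y' * √z')) := by
        rw [add_sq, add_sq, sq_sqrt hy, sq_sqrt hz, sq_sqrt hy', sq_sqrt hz']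
        ring
      _ ≤ (a * y + b * y') + (a * z + b * z') +
            2 * (√(a * y + b * y') * √(a * z + b * z')) := by
        gcongr
        exact mul_sqrt_mul_sqrt_add_le ha hb hy hz hy' hz'
      _ = (√(a * y + b * y') + √(a * z + b * z')) ^ 2 := by
        rw [add_sq, sq_sqrt hY, sq_sqrt hZ]
        ring
  exact (sqrt_lt (by positivity) (by positivity)).2 hsquared

theorem mesh_admissible_metric_space_convex_general (m : ℕ)
    (F : Finset (Finset (Fin m))) :
    Convex ℝ {u : Fin m → ℝ |
      (∀ e, 0 < u e) ∧
      (∑ e, u e = (m : ℝ)) ∧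
      ∀ f ∈ F, ∀ i ∈ f, ∀ j ∈ f, ∀ k ∈ f, i ≠ j → i ≠ k → j ≠ k →
        Real.sqrt (u i) < Real.sqrt (u j) + Real.sqrt (u k)} := by
  rintro u ⟨hu_pos, hu_sum, hu_face⟩ v ⟨hv_pos, hv_sum, hv_face⟩ a b ha hb hab
  refine ⟨fun e => convex_Ioi (0 : ℝ) (hu_pos e) (hv_pos e) ha hb hab, ?_,
    fun f hf i hi j hj k hk hij hik hjk => ?_⟩
  · simp only [Pi.add_apply, Pi.smul_apply, smul_eq_mul, Finset.sum_add_distrib,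
      ← Finset.mul_sum, hu_sum, hv_sum]
    linear_combination (m : ℝ) * hab
  · exact sqrt_lt_sqrt_add_sqrt_combo ha hb hab (hu_pos i).le (hu_pos j).le (hu_pos k).le
      (hv_pos i).le (hv_pos j).le (hv_pos k).le
      (hu_face f hf i hi j hj k hk hij hik hjk) (hv_face f hf i hi j hj k hk hij hik hjk)

/-- For a triangulated surface with `m` edges and face set `F`
(each face an unordered triple of distinct edge indices), the admissible metric
space `Ω_u = {u : u_e > 0, Σ_e u_e = m, and on each face the square roots
√u_i, √u_j, √u_k satisfy the strict triangle inequalities}` is convex. -/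
theorem mesh_admissible_metric_space_convex (m : ℕ) (hm : 0 < m)
    (F : Finset (Finset (Fin m))) (hF : ∀ f ∈ F, f.card = 3) :
    Convex ℝ {u : Fin m → ℝ |
      (∀ e, 0 < u e) ∧
      (∑ e, u e = (m : ℝ)) ∧
      ∀ f ∈ F, ∀ i ∈ f, ∀ j ∈ f, ∀ k ∈ f, i ≠ j → i ≠ k → j ≠ k →
        Real.sqrt (u i) < Real.sqrt (u j) + Real.sqrt (u k)} :=
  mesh_admissible_metric_space_convex_general m F
end
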